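/- For every integer t ≥ 6, the odd Hadwiger number of the direct product of the complete graphs K_t and K_3 satisfies oh(K_t × K_3) ≥ t + 2. -/

import Mathlib

open SimpleGraph

/-- `H` is an odd minor of `G`: there are pairwise vertex-disjoint subtrees of `G`, one for
each vertex of `H`, and a 2-colouring of the vertices which is proper on each tree, such that
for every edge of `H` there is a monochromatic edge of `G` between the corresponding trees. -/
def IsOddMinorOf {W V : Type*} (H : SimpleGraph W) (G : SimpleGraph V) : Prop :=
  ∃ (T : W → G.Subgraph) (c : V → Fin 2),
    (∀ w, (T w).coe.IsTree) ∧
    (Pairwise fun w w' => Disjoint (T w).verts (T w').verts) ∧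
    (∀ w, ∀ x y, (T w).Adj x y → c x ≠ c y) ∧
    (∀ w w', H.Adj w w' →
      ∃ x y, x ∈ (T w).verts ∧ y ∈ (T w').verts ∧ G.Adj x y ∧ c x = c y)

/-- The odd Hadwiger number of `G`: the largest `r` such that `K_r` is an odd minor of `G`. -/
noncomputable def oddHadwiger {V : Type*} [Fintype V] (G : SimpleGraph V) : ℕ :=
  sSup {r : ℕ | IsOddMinorOf (⊤ : SimpleGraph (Fin r)) G}

/-- The Cartesian product `G □ H`. -/
def cartProd {α β : Type*} (G : SimpleGraph α) (H : SimpleGraph β) : SimpleGraph (α × β) where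
  Adj x y := (x.1 = y.1 ∧ H.Adj x.2 y.2) ∨ (x.2 = y.2 ∧ G.Adj x.1 y.1)
  symm := by
    constructor
    rintro x y (⟨h1, h2⟩ | ⟨h1, h2⟩)
    · exact Or.inl ⟨h1.symm, h2.symm⟩
    · exact Or.inr ⟨h1.symm, h2.symm⟩
  loopless := by
    constructor
    rintro x (⟨_, h⟩ | ⟨_, h⟩)
    · exact H.irrefl h
    · exact G.irrefl h

/-- The strong product `G ⊠ H`. -/
def strongProd {α β : Type*} (G : SimpleGraph α) (H : SimpleGraph β) : SimpleGraph (α × β) where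
  Adj x y := (x.1 = y.1 ∧ H.Adj x.2 y.2) ∨ (x.2 = y.2 ∧ G.Adj x.1 y.1) ∨
    (G.Adj x.1 y.1 ∧ H.Adj x.2 y.2)
  symm := by
    constructor
    rintro x y (⟨h1, h2⟩ | ⟨h1, h2⟩ | ⟨h1, h2⟩)
    · exact Or.inl ⟨h1.symm, h2.symm⟩
    · exact Or.inr (Or.inl ⟨h1.symm, h2.symm⟩)
    · exact Or.inr (Or.inr ⟨h1.symm, h2.symm⟩)
  loopless := by
    constructor
    rintro x (⟨_, h⟩ | ⟨_, h⟩ | ⟨h, _⟩)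
    · exact H.irrefl h
    · exact G.irrefl h
    · exact G.irrefl h

/-- The lexicographic product `G ∘ H`. -/
def lexProd {α β : Type*} (G : SimpleGraph α) (H : SimpleGraph β) : SimpleGraph (α × β) where
  Adj x y := G.Adj x.1 y.1 ∨ (x.1 = y.1 ∧ H.Adj x.2 y.2)
  symm := by
    constructor
    rintro x y (h | ⟨h1, h2⟩)
    · exact Or.inl h.symm
    · exact Or.inr ⟨h1.symm, h2.symm⟩
  loopless := by
    constructor
    rintro x (h | ⟨_, h⟩)
    · exact G.irrefl h
    · exact H.irrefl h

/-- The direct (tensor) product `G × H`. -/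
def dirProd {α β : Type*} (G : SimpleGraph α) (H : SimpleGraph β) : SimpleGraph (α × β) where
  Adj x y := G.Adj x.1 y.1 ∧ H.Adj x.2 y.2
  symm := by
    constructor
    rintro x y ⟨h1, h2⟩
    exact ⟨h1.symm, h2.symm⟩
  loopless := by
    constructor
    rintro x ⟨h, _⟩
    exact G.irrefl h

/-!
Write `t = m + 3` and split the columns of `K_t × K_3` into a cyclic block `ZMod m` and three
extra columns. All branch sets are stars, hence trees. For every `i : ZMod m` the path
`(i, 0) – (i + 2, 1) – (i + 1, 2)` is a branch set; the nine vertices of the extra columns carry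
five more (four edges and one vertex), so there are `m + 5 = t + 2` branch sets. A vertex gets
colour `1` iff it lies in row `1`, except in the last extra column where this is flipped.
Two cyclic branch sets `i`, `j` are joined by the monochromatic edge `(i, 0) – (j + 1, 2)`, or,
if `i = j + 1`, by `(i + 1, 2) – (j, 0)`, which is an edge because `2 ≠ 0` in `ZMod m`. Every extra
branch set has a vertex of colour `0`, adjacent to a colour-`0` vertex of each cyclic branch set
in row `0` or `2`; the extra branch sets among themselves are a finite check.
-/

namespace SimpleGraph

variable {V : Type*}

def starSubgraph (G : SimpleGraph V) (v : V) (L : Set V) (hL : ∀ x ∈ L, G.Adj v x) :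
    G.Subgraph where
  verts := insert v L
  Adj a b := a = v ∧ b ∈ L ∨ b = v ∧ a ∈ L
  adj_sub := by
    rintro a b (⟨rfl, hb⟩ | ⟨rfl, ha⟩)
    exacts [hL b hb, (hL a ha).symm]
  edge_vert := by
    rintro a b (⟨rfl, -⟩ | ⟨-, ha⟩)
    exacts [Set.mem_insert _ _, Set.mem_insert_of_mem _ ha]
  symm := ⟨fun _ _ => Or.symm⟩

theorem IsTree.coe_starSubgraph (G : SimpleGraph V) (v : V) (L : Set V)
    (hL : ∀ x ∈ L, G.Adj v x) : (G.starSubgraph v L hL).coe.IsTree := by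
  have hv : v ∉ L := fun h => (hL v h).ne rfl
  convert isTree_starGraph (⟨v, Set.mem_insert v L⟩ : (G.starSubgraph v L hL).verts)
  ext ⟨a, ha⟩ ⟨b, hb⟩
  simp only [Subgraph.coe_adj, starSubgraph, starGraph_adj, ne_eq]
  rcases ha with rfl | ha <;> rcases hb with rfl | hb <;> grind

def Iso.dirProd {α α' β β' : Type*} {G : SimpleGraph α} {G' : SimpleGraph α'}
    {H : SimpleGraph β} {H' : SimpleGraph β'} (e : G ≃g G') (f : H ≃g H') :
    _root_.dirProd G H ≃g _root_.dirProd G' H' where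
  toEquiv := e.toEquiv.prodCongr f.toEquiv
  map_rel_iff' := and_congr e.map_rel_iff f.map_rel_iff

end SimpleGraph

theorem dirProd_top_adj {α β : Type*} {x y : α × β} :
    (dirProd (⊤ : SimpleGraph α) (⊤ : SimpleGraph β)).Adj x y ↔ x.1 ≠ y.1 ∧ x.2 ≠ y.2 :=
  Iff.rfl

section OddMinor

variable {V W V' W' : Type*} {H : SimpleGraph W} {G : SimpleGraph V}

theorem isOddMinorOf_of_stars (centre : W → V) (leaves : W → Set V) (c : V → Fin 2)
    (hleaf : ∀ w, ∀ x ∈ leaves w, G.Adj (centre w) x ∧ c (centre w) ≠ c x)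
    (hdisj : Pairwise fun w w' =>
      Disjoint (insert (centre w) (leaves w)) (insert (centre w') (leaves w')))
    (hmono : ∀ w w', H.Adj w w' → ∃ x y, x ∈ insert (centre w) (leaves w) ∧
      y ∈ insert (centre w') (leaves w') ∧ G.Adj x y ∧ c x = c y) :
    IsOddMinorOf H G := by
  refine ⟨fun w => G.starSubgraph (centre w) (leaves w) fun x hx => (hleaf w x hx).1, c,
    fun w => IsTree.coe_starSubgraph .., hdisj, ?_, hmono⟩
  rintro w x y (⟨rfl, hy⟩ | ⟨rfl, hx⟩)
  exacts [(hleaf w y hy).2, ((hleaf w x hx).2).symm]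

theorem IsOddMinorOf.of_embedding {H' : SimpleGraph W'} (h : IsOddMinorOf H G) (f : H' ↪g H) :
    IsOddMinorOf H' G := by
  obtain ⟨T, c, htree, hdisj, hproper, hmono⟩ := h
  exact ⟨T ∘ f, c, fun w => htree (f w), fun w w' hne => hdisj (f.injective.ne hne),
    fun w => hproper (f w), fun w w' hadj => hmono (f w) (f w') (f.map_adj_iff.mpr hadj)⟩

theorem IsOddMinorOf.map_copy {G' : SimpleGraph V'} (h : IsOddMinorOf H G) (f : Copy G G') :
    IsOddMinorOf H G' := by
  obtain ⟨T, c, htree, hdisj, hproper, hmono⟩ := h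
  have hc : ∀ x, Function.extend f c 0 (f x) = c x := fun x => f.injective.extend_apply c 0 x
  refine ⟨fun w => (T w).map f.toHom, Function.extend f c 0,
    fun w => (f.isoSubgraphMap (T w)).isTree_iff.mp (htree w), fun w w' hne => ?_, ?_, ?_⟩
  · exact (Set.disjoint_image_iff f.injective).mpr (hdisj hne)
  · rintro w _ _ ⟨x, y, hxy, rfl, rfl⟩
    simpa only [Copy.coe_toHom, hc] using hproper w x y hxy
  · intro w w' hadj
    obtain ⟨x, y, hx, hy, hxy, hcxy⟩ := hmono w w' hadj
    exact ⟨f x, f y, ⟨x, hx, rfl⟩, ⟨y, hy, rfl⟩, f.toHom.map_adj hxy, by simp only [hc, hcxy]⟩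

theorem IsOddMinorOf.card_le [Finite V] (h : IsOddMinorOf H G) : Nat.card W ≤ Nat.card V := by
  obtain ⟨T, -, htree, hdisj, -, -⟩ := h
  choose f hf using fun w => Set.nonempty_coe_sort.mp (htree w).connected.nonempty
  refine Nat.card_le_card_of_injective f fun w w' hff => ?_
  by_contra hne
  exact Set.disjoint_left.mp (hdisj hne) (hf w) (hff ▸ hf w')

theorem le_oddHadwiger [Fintype V] {r : ℕ} (h : IsOddMinorOf (⊤ : SimpleGraph (Fin r)) G) :
    r ≤ oddHadwiger G :=
  le_csSup ⟨Nat.card V, fun s hs => by simpa using hs.card_le⟩ h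

end OddMinor

theorem ZMod.add_natCast_ne_add_natCast {m a b : ℕ} (ha : a < m) (hb : b < m) (hab : a ≠ b)
    (i : ZMod m) : i + a ≠ i + b := by
  rw [Ne, add_right_inj, ZMod.natCast_eq_natCast_iff', Nat.mod_eq_of_lt ha, Nat.mod_eq_of_lt hb]
  exact hab

def finAddEquivZModSum (m n : ℕ) [NeZero m] : Fin (m + n) ≃ ZMod m ⊕ Fin n :=
  finSumFinEquiv.symm.trans ((ZMod.finEquiv m).toEquiv.sumCongr (Equiv.refl _))

namespace OddCliqueModel

/- Vertices are pairs (column, row). On the three extra columns, adjacency in `K_3 × K_3` is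
spelled out as `p.1 ≠ q.1 ∧ p.2 ≠ q.2` so that the finite checks below run by `decide`. -/

def smallColour (p : Fin 3 × Fin 3) : Fin 2 := if (p.2 = 1 ↔ p.1 = 2) then 0 else 1

def smallCentre : Fin 5 → Fin 3 × Fin 3 := ![(0, 0), (0, 1), (0, 2), (1, 0), (2, 1)]

def smallLeaves : Fin 5 → Finset (Fin 3 × Fin 3) := ![{(1, 1)}, {(1, 2)}, {(2, 0)}, {(2, 2)}, ∅]

def smallBranch (k : Fin 5) : Finset (Fin 3 × Fin 3) := insert (smallCentre k) (smallLeaves k)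

theorem smallCentre_ne_of_mem_smallLeaves : ∀ k, ∀ p ∈ smallLeaves k,
    ((smallCentre k).1 ≠ p.1 ∧ (smallCentre k).2 ≠ p.2) ∧
      smallColour (smallCentre k) ≠ smallColour p := by
  decide

theorem disjoint_smallBranch : ∀ k k', k ≠ k' → Disjoint (smallBranch k) (smallBranch k') := by
  decide

theorem exists_monochromatic_smallBranch : ∀ k k', k ≠ k' →
    ∃ p ∈ smallBranch k, ∃ q ∈ smallBranch k',
      (p.1 ≠ q.1 ∧ p.2 ≠ q.2) ∧ smallColour p = smallColour q := by
  decide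

theorem exists_smallColour_eq_zero : ∀ k, ∃ p ∈ smallBranch k, smallColour p = 0 := by
  decide

variable {m : ℕ}

abbrev Vert (m : ℕ) := (ZMod m ⊕ Fin 3) × Fin 3

abbrev host (m : ℕ) := dirProd (⊤ : SimpleGraph (ZMod m ⊕ Fin 3)) (⊤ : SimpleGraph (Fin 3))

def smallVert (p : Fin 3 × Fin 3) : Vert m := (.inr p.1, p.2)

def colour : Vert m → Fin 2
  | (.inl _, r) => if r = 1 then 1 else 0
  | (.inr x, r) => smallColour (x, r)

def centre : ZMod m ⊕ Fin 5 → Vert m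
  | .inl i => (.inl (i + 2), 1)
  | .inr k => smallVert (smallCentre k)

def leaves : ZMod m ⊕ Fin 5 → Set (Vert m)
  | .inl i => {(.inl i, 0), (.inl (i + 1), 2)}
  | .inr k => smallVert '' smallLeaves k

def branch (w : ZMod m ⊕ Fin 5) : Set (Vert m) := insert (centre w) (leaves w)

@[simp]
theorem mem_branch_inl {i : ZMod m} {x : Vert m} :
    x ∈ branch (.inl i) ↔ x = (.inl (i + 2), 1) ∨ x = (.inl i, 0) ∨ x = (.inl (i + 1), 2) := by
  simp [branch, centre, leaves]

theorem branch_inr (k : Fin 5) : branch (m := m) (.inr k) = smallVert '' smallBranch k := by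
  simp [branch, centre, leaves, smallBranch, Set.image_insert_eq]

theorem smallVert_mem_branch {k : Fin 5} {p : Fin 3 × Fin 3} (hp : p ∈ smallBranch k) :
    smallVert p ∈ branch (m := m) (.inr k) := by
  rw [branch_inr]
  exact ⟨p, hp, rfl⟩

theorem smallVert_adj_smallVert {p q : Fin 3 × Fin 3} (h : p.1 ≠ q.1 ∧ p.2 ≠ q.2) :
    (host m).Adj (smallVert p) (smallVert q) :=
  ⟨by simpa [smallVert] using h.1, h.2⟩

theorem smallVert_injective : Function.Injective (smallVert (m := m)) := by
  rintro ⟨x, r⟩ ⟨y, s⟩ h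
  simp_all [smallVert]

theorem add_two_ne_self (hm : 3 ≤ m) (i : ZMod m) : i + 2 ≠ i := by
  simpa using ZMod.add_natCast_ne_add_natCast (by omega : 2 < m) (by omega : 0 < m) two_ne_zero i

theorem add_two_ne_add_one (hm : 3 ≤ m) (i : ZMod m) : i + 2 ≠ i + 1 := by
  simpa using ZMod.add_natCast_ne_add_natCast (by omega : 2 < m) (by omega : 1 < m) (by omega) i

theorem centre_adj_leaf (hm : 3 ≤ m) (w : ZMod m ⊕ Fin 5) (x : Vert m) (hx : x ∈ leaves w) :
    (host m).Adj (centre w) x ∧ colour (centre w) ≠ colour x := by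
  rw [dirProd_top_adj]
  rcases w with i | k
  · rcases hx with rfl | rfl <;>
      simp [centre, colour, add_two_ne_self hm, add_two_ne_add_one hm]
  · obtain ⟨p, hp, rfl⟩ := hx
    simpa [centre, smallVert, colour] using smallCentre_ne_of_mem_smallLeaves k p hp

theorem disjoint_branch_inl_inr (i : ZMod m) (k : Fin 5) :
    Disjoint (branch (.inl i)) (branch (.inr k)) := by
  rw [branch_inr, Set.disjoint_right]
  rintro _ ⟨p, -, rfl⟩
  simp [smallVert]

theorem pairwise_disjoint_branch :
    Pairwise fun w w' : ZMod m ⊕ Fin 5 => Disjoint (branch w) (branch w') := by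
  rintro (i | k) (j | l) hne
  · rw [Set.disjoint_left]
    rintro p hp hq
    rw [mem_branch_inl] at hp hq
    rcases hp with rfl | rfl | rfl <;> simp at hq <;> exact hne (congrArg _ hq)
  · exact disjoint_branch_inl_inr i l
  · exact (disjoint_branch_inl_inr j k).symm
  · rw [branch_inr, branch_inr, Set.disjoint_image_iff smallVert_injective, Finset.disjoint_coe]
    exact disjoint_smallBranch k l fun h => hne (congrArg _ h)

theorem exists_monochromatic_adj_inl_inl (hm : 3 ≤ m) (i j : ZMod m) :
    ∃ x y, x ∈ branch (.inl i) ∧ y ∈ branch (.inl j) ∧ (host m).Adj x y ∧ colour x = colour y := by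
  by_cases h : i = j + 1
  · refine ⟨(.inl (i + 1), 2), (.inl j, 0), by simp, by simp, ?_, rfl⟩
    refine ⟨?_, by simp⟩
    simpa [h, add_assoc, one_add_one_eq_two] using add_two_ne_self hm j
  · exact ⟨(.inl i, 0), (.inl (j + 1), 2), by simp, by simp, ⟨by simpa using h, by simp⟩, rfl⟩

theorem exists_monochromatic_adj_inl_inr (i : ZMod m) (k : Fin 5) :
    ∃ x y, x ∈ branch (.inl i) ∧ y ∈ branch (.inr k) ∧ (host m).Adj x y ∧ colour x = colour y := by
  obtain ⟨p, hp, hp0⟩ := exists_smallColour_eq_zero k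
  have hcol (x : ZMod m) (r : Fin 3) (hr : r ≠ 1) :
      colour (.inl x, r) = colour (smallVert (m := m) p) := by
    simpa [colour, smallVert, hr] using hp0.symm
  have hy := smallVert_mem_branch (m := m) hp
  by_cases h : p.2 = 0
  · refine ⟨(.inl (i + 1), 2), smallVert p, by simp, hy, ?_, hcol _ _ (by decide)⟩
    exact ⟨by simp [smallVert], by simp [smallVert, h]⟩
  · refine ⟨(.inl i, 0), smallVert p, by simp, hy, ?_, hcol _ _ (by decide)⟩
    exact ⟨by simp [smallVert], by simpa [smallVert, eq_comm] using h⟩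

theorem exists_monochromatic_adj (hm : 3 ≤ m) {w w' : ZMod m ⊕ Fin 5} (hne : w ≠ w') :
    ∃ x y, x ∈ branch w ∧ y ∈ branch w' ∧ (host m).Adj x y ∧ colour x = colour y := by
  rcases w with i | k <;> rcases w' with j | l
  · exact exists_monochromatic_adj_inl_inl hm i j
  · exact exists_monochromatic_adj_inl_inr i l
  · obtain ⟨x, y, hx, hy, hxy, hc⟩ := exists_monochromatic_adj_inl_inr j k
    exact ⟨y, x, hy, hx, hxy.symm, hc.symm⟩
  · obtain ⟨p, hp, q, hq, hpq, hc⟩ :=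
      exists_monochromatic_smallBranch k l fun h => hne (congrArg _ h)
    exact ⟨smallVert p, smallVert q, smallVert_mem_branch hp, smallVert_mem_branch hq,
      smallVert_adj_smallVert hpq, hc⟩

theorem isOddMinorOf (hm : 3 ≤ m) : IsOddMinorOf (⊤ : SimpleGraph (ZMod m ⊕ Fin 5)) (host m) :=
  isOddMinorOf_of_stars centre leaves colour (centre_adj_leaf hm) pairwise_disjoint_branch
    fun _ _ hne => exists_monochromatic_adj hm hne

end OddCliqueModel

theorem stmt_9 (t : ℕ) (ht : 6 ≤ t) :
    oddHadwiger (dirProd (⊤ : SimpleGraph (Fin t)) (⊤ : SimpleGraph (Fin 3))) ≥ t + 2 := by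
  obtain ⟨m, rfl⟩ : ∃ m, t = m + 3 := ⟨t - 3, by omega⟩
  have : NeZero m := ⟨by omega⟩
  have relabelVertices : OddCliqueModel.host m ≃g dirProd (⊤ : SimpleGraph (Fin (m + 3))) ⊤ :=
    (Iso.completeGraph (finAddEquivZModSum m 3).symm).dirProd .refl
  have relabelClique : (⊤ : SimpleGraph (Fin (m + 3 + 2))) ↪g ⊤ :=
    (Iso.completeGraph (finAddEquivZModSum m 5)).toEmbedding
  exact le_oddHadwiger
    (((OddCliqueModel.isOddMinorOf (by omega)).of_embedding relabelClique).map_copy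
      relabelVertices.toCopy)
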